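/- arXiv:2502.18700 — 7 statements merged into one kernel-verified Lean document; each statement's English description precedes it below -/
import Mathlib

section
/- Efros' theorem (generalized convolution theorem for the Laplace transform): Let f : [0,∞) × [0,∞) → ℂ and h : [0,∞) → ℂ be measurable, let s be a complex number, and let G, q ∈ ℂ. Assume that the function (ξ,t) ↦ f(ξ,t) · h(ξ) · exp(−s·t) is (absolutely) integrable on [0,∞) × [0,∞), that for every ξ ≥ 0 one has ∫₀^∞ f(ξ,t) · exp(−s·t) dt = G · exp(−ξ·q), and that ξ ↦ h(ξ) · exp(−ξ·q) is integrable on [0,∞) with ĥ(q) := ∫₀^∞ h(ξ) · exp(−ξ·q) dξ. Then ∫₀^∞ ( ∫₀^∞ f(ξ,t) · h(ξ) dξ ) · exp(−s·t) dt = G · ĥ(q). -/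
open MeasureTheory Set

/-- Efros' theorem: generalized convolution theorem for the Laplace transform. -/
theorem efros_theorem
    (f : ℝ → ℝ → ℂ) (h : ℝ → ℂ) (s G q : ℂ)
    (hf_meas : Measurable (Function.uncurry f))
    (hh_meas : Measurable h)
    (h_int : IntegrableOn
      (fun p : ℝ × ℝ => f p.1 p.2 * h p.1 * Complex.exp (-s * (p.2 : ℂ)))
      (Ici (0 : ℝ) ×ˢ Ici (0 : ℝ)))
    (h_laplace_f : ∀ ξ : ℝ, 0 ≤ ξ →
      ∫ t in Ici (0 : ℝ), f ξ t * Complex.exp (-s * (t : ℂ))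
        = G * Complex.exp (-(ξ : ℂ) * q))
    (h_int_h : IntegrableOn (fun ξ : ℝ => h ξ * Complex.exp (-(ξ : ℂ) * q))
      (Ici (0 : ℝ))) :
    ∫ t in Ici (0 : ℝ),
        (∫ ξ in Ici (0 : ℝ), f ξ t * h ξ) * Complex.exp (-s * (t : ℂ))
      = G * ∫ ξ in Ici (0 : ℝ), h ξ * Complex.exp (-(ξ : ℂ) * q) := by
  have hint' : Integrable
      (fun p : ℝ × ℝ => f p.1 p.2 * h p.1 * Complex.exp (-s * (p.2 : ℂ)))
      ((volume.restrict (Ici (0 : ℝ))).prod (volume.restrict (Ici (0 : ℝ)))) := by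
    rw [Measure.prod_restrict]; exact h_int
  have hswap :
      ∫ t in Ici (0 : ℝ), ∫ ξ in Ici (0 : ℝ),
          f ξ t * h ξ * Complex.exp (-s * (t : ℂ))
        = ∫ ξ in Ici (0 : ℝ), ∫ t in Ici (0 : ℝ),
          f ξ t * h ξ * Complex.exp (-s * (t : ℂ)) := by
    exact (MeasureTheory.integral_integral_swap hint').symm
  calc
    ∫ t in Ici (0 : ℝ),
        (∫ ξ in Ici (0 : ℝ), f ξ t * h ξ) * Complex.exp (-s * (t : ℂ))
      = ∫ t in Ici (0 : ℝ), ∫ ξ in Ici (0 : ℝ),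
          f ξ t * h ξ * Complex.exp (-s * (t : ℂ)) := by
        congr 1; ext t; rw [← integral_mul_const]
    _ = ∫ ξ in Ici (0 : ℝ), ∫ t in Ici (0 : ℝ),
          f ξ t * h ξ * Complex.exp (-s * (t : ℂ)) := hswap
    _ = ∫ ξ in Ici (0 : ℝ), G * (h ξ * Complex.exp (-(ξ : ℂ) * q)) := by
        apply setIntegral_congr_fun measurableSet_Ici
        intro ξ hξ
        dsimp only
        have : (fun t => f ξ t * h ξ * Complex.exp (-s * (t : ℂ)))
            = fun t => (f ξ t * Complex.exp (-s * (t : ℂ))) * h ξ := by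
          ext t; ring
        rw [this, integral_mul_const, h_laplace_f ξ hξ]
        ring
    _ = G * ∫ ξ in Ici (0 : ℝ), h ξ * Complex.exp (-(ξ : ℂ) * q) :=
        integral_const_mul G _
end

section
/- Laplace transform of the one-parameter Mittag-Leffler function: Let 0 < μ ≤ 1, λ > 0, and let s > 0 be a real number with s^μ > λ. Then the function t ↦ exp(−s·t) · E_μ(−λ·t^μ) is integrable on (0,∞) and ∫₀^∞ exp(−s·t) · E_μ(−λ·t^μ) dt = s^{μ−1} / (s^μ + λ). -/
/-!
Expanding `E_μ(c t^μ)` termwise, Euler's integral gives `∫₀^∞ e^{-st} t^{μk} dt = Γ(μk+1) / s^{μk+1}`,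
so the `k`-th term transforms to `(c / s^μ)^k / s` and the Laplace transform is the geometric series
`s⁻¹ ∑ (c / s^μ)^k = s^{μ-1} / (s^μ - c)`. The same computation with `|c|` shows that the integrals
of the absolute values of the terms form a convergent geometric series, which justifies exchanging
sum and integral and gives integrability.
-/

open MeasureTheory Set

noncomputable def mittagLeffler (μ : ℝ) (z : ℝ) : ℝ :=
  ∑' k : ℕ, z ^ k / Real.Gamma (μ * k + 1)

namespace MeasureTheory

theorem integrable_tsum_of_summable_integral_norm {α E ι : Type*} [MeasurableSpace α]
    {μ : Measure α} [NormedAddCommGroup E] [CompleteSpace E] [SecondCountableTopology E]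
    [MeasurableSpace E] [BorelSpace E] [Countable ι] {F : ι → α → E}
    (hF_int : ∀ i, Integrable (F i) μ) (hF_sum : Summable fun i ↦ ∫ a, ‖F i a‖ ∂μ) :
    Integrable (fun a ↦ ∑' i, F i a) μ := by
  refine ⟨(AEMeasurable.tsum fun i ↦ (hF_int i).aemeasurable).aestronglyMeasurable, ?_⟩
  calc ∫⁻ a, ‖∑' i, F i a‖ₑ ∂μ ≤ ∫⁻ a, ∑' i, ‖F i a‖ₑ ∂μ :=
        lintegral_mono fun _ ↦ enorm_tsum_le_tsum_enorm
    _ = ∑' i, ENNReal.ofReal (∫ a, ‖F i a‖ ∂μ) := by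
        rw [lintegral_tsum fun i ↦ (hF_int i).aestronglyMeasurable.enorm]
        simp_rw [ofReal_integral_norm_eq_lintegral_enorm (hF_int _)]
    _ = ENNReal.ofReal (∑' i, ∫ a, ‖F i a‖ ∂μ) :=
        (ENNReal.ofReal_tsum_of_nonneg (fun i ↦ integral_nonneg fun _ ↦ norm_nonneg _) hF_sum).symm
    _ < ⊤ := ENNReal.ofReal_lt_top

end MeasureTheory

open Real

section LaplaceTransform

variable {μ s : ℝ}

theorem integrableOn_exp_mul_rpow_pow (hμ : 0 ≤ μ) (hs : 0 < s) (c : ℝ) (k : ℕ) :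
    IntegrableOn (fun t ↦ exp (-s * t) * (c * t ^ μ) ^ k) (Ioi 0) := by
  have hk : -1 < μ * k := by nlinarith [(k.cast_nonneg : (0 : ℝ) ≤ k)]
  have : IntegrableOn (fun t ↦ c ^ k * (t ^ (μ * k) * exp (-s * t ^ (1 : ℝ)))) (Ioi 0) :=
    (integrableOn_rpow_mul_exp_neg_mul_rpow hk zero_lt_one hs).const_mul (c ^ k)
  refine this.congr_fun (fun t ht ↦ ?_) measurableSet_Ioi
  simp only [rpow_one, mul_pow, rpow_mul (le_of_lt ht), rpow_natCast]
  ring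

theorem integral_exp_mul_rpow_pow_div_Gamma (hμ : 0 ≤ μ) (hs : 0 < s) (c : ℝ) (k : ℕ) :
    ∫ t in Ioi 0, exp (-s * t) * ((c * t ^ μ) ^ k / Gamma (μ * k + 1)) = (c / s ^ μ) ^ k / s := by
  have hk : 0 < μ * k + 1 := by nlinarith [(k.cast_nonneg : (0 : ℝ) ≤ k)]
  have hΓ : Gamma (μ * k + 1) ≠ 0 := (Gamma_pos_of_pos hk).ne'
  calc ∫ t in Ioi 0, exp (-s * t) * ((c * t ^ μ) ^ k / Gamma (μ * k + 1))
      = c ^ k / Gamma (μ * k + 1) * ∫ t in Ioi 0, t ^ (μ * k + 1 - 1) * exp (-(s * t)) := by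
        rw [← integral_const_mul]
        refine setIntegral_congr_fun measurableSet_Ioi fun t ht ↦ ?_
        simp only [add_sub_cancel_right, mul_pow, rpow_mul (le_of_lt ht), rpow_natCast, neg_mul]
        ring
    _ = (c / s ^ μ) ^ k / s := by
        rw [integral_rpow_mul_exp_neg_mul_Ioi hk hs, one_div, inv_rpow hs.le,
          rpow_add_one hs.ne', rpow_mul hs.le, rpow_natCast, div_pow]
        field_simp

theorem laplace_mittagLeffler_mul_rpow (hμ : 0 ≤ μ) (hs : 0 < s)
    {c : ℝ} (hc : |c| < s ^ μ) :
    IntegrableOn (fun t ↦ exp (-s * t) * mittagLeffler μ (c * t ^ μ)) (Ioi 0) ∧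
      ∫ t in Ioi 0, exp (-s * t) * mittagLeffler μ (c * t ^ μ) = s ^ (μ - 1) / (s ^ μ - c) := by
  set F : ℕ → ℝ → ℝ := fun k t ↦ exp (-s * t) * ((c * t ^ μ) ^ k / Gamma (μ * k + 1))
  have hΓ (k : ℕ) : 0 < Gamma (μ * k + 1) :=
    Gamma_pos_of_pos (by nlinarith [(k.cast_nonneg : (0 : ℝ) ≤ k)])
  have hF_int (k : ℕ) : IntegrableOn (F k) (Ioi 0) := by
    simp only [F, ← mul_div_assoc]
    exact (integrableOn_exp_mul_rpow_pow hμ hs c k).div_const _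
  have hF_norm (k : ℕ) : ∫ t in Ioi 0, ‖F k t‖ = (|c| / s ^ μ) ^ k / s := by
    rw [← integral_exp_mul_rpow_pow_div_Gamma hμ hs |c| k]
    refine setIntegral_congr_fun measurableSet_Ioi fun t ht ↦ ?_
    simp [F, abs_of_pos (hΓ k), abs_of_nonneg (rpow_nonneg (le_of_lt ht) μ)]
  have hsμ : 0 < s ^ μ := rpow_pos_of_pos hs μ
  have hratio : ‖c / s ^ μ‖ < 1 := by
    rwa [norm_div, Real.norm_of_nonneg hsμ.le, div_lt_one hsμ]
  have hF_sum : Summable fun k ↦ ∫ t in Ioi 0, ‖F k t‖ := by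
    simp_rw [hF_norm]
    exact (summable_geometric_of_lt_one (by positivity) ((div_lt_one hsμ).2 hc)).div_const s
  have hF_tsum : (fun t ↦ exp (-s * t) * mittagLeffler μ (c * t ^ μ)) = fun t ↦ ∑' k, F k t :=
    funext fun t ↦ tsum_mul_left.symm
  rw [hF_tsum, ← integral_tsum_of_summable_integral_norm hF_int hF_sum]
  refine ⟨integrable_tsum_of_summable_integral_norm hF_int hF_sum, ?_⟩
  simp_rw [F, integral_exp_mul_rpow_pow_div_Gamma hμ hs c, tsum_div_const,
    tsum_geometric_of_norm_lt_one hratio, rpow_sub_one hs.ne']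
  field_simp

end LaplaceTransform

theorem laplace_mittagLeffler_general (μ lam s : ℝ)
    (hμ0 : 0 < μ) (hlam : 0 < lam) (hs : 0 < s)
    (hslam : lam < s ^ μ) :
    IntegrableOn (fun t : ℝ => Real.exp (-s * t) * mittagLeffler μ (-lam * t ^ μ))
        (Ioi (0 : ℝ)) ∧
      ∫ t in Ioi (0 : ℝ), Real.exp (-s * t) * mittagLeffler μ (-lam * t ^ μ)
        = s ^ (μ - 1) / (s ^ μ + lam) := by
  have h := laplace_mittagLeffler_mul_rpow hμ0.le hs (c := -lam)
    (by rwa [abs_neg, abs_of_pos hlam])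
  rwa [sub_neg_eq_add] at h

/-- Laplace transform of the one-parameter Mittag-Leffler function:
`∫₀^∞ e^{-s t} E_μ(-λ t^μ) dt = s^{μ-1}/(s^μ + λ)` for `0 < μ ≤ 1`, `λ > 0`,
`s > 0` with `s^μ > λ`. -/
theorem laplace_mittagLeffler (μ lam s : ℝ)
    (hμ0 : 0 < μ) (hμ1 : μ ≤ 1) (hlam : 0 < lam) (hs : 0 < s)
    (hslam : lam < s ^ μ) :
    IntegrableOn (fun t : ℝ => Real.exp (-s * t) * mittagLeffler μ (-lam * t ^ μ))
        (Ioi (0 : ℝ)) ∧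
      ∫ t in Ioi (0 : ℝ), Real.exp (-s * t) * mittagLeffler μ (-lam * t ^ μ)
        = s ^ (μ - 1) / (s ^ μ + lam) :=
  laplace_mittagLeffler_general μ lam s hμ0 hlam hs hslam
end

section
/- Laplace transform of the uniformly distributed order memory kernel: let γ(t) = ∫₀¹ t^{−μ}/Γ(1−μ) dμ for t > 0. Then for every real s > 0 with s ≠ 1, the function t ↦ exp(−s·t) · γ(t) is integrable on (0,∞) and ∫₀^∞ exp(−s·t) · γ(t) dt = (s − 1) / (s · log s). -/
open MeasureTheory Set

private lemma lemA {a r : ℝ} (ha : 0 < a) (hr : 0 < r) :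
    IntegrableOn (fun t : ℝ => Real.exp (-(r*t)) * t ^ (a-1)) (Ioi 0) := by
  have h0 := Real.GammaIntegral_convergent ha
  have h1 := (integrableOn_Ioi_comp_mul_left_iff (fun x : ℝ => Real.exp (-x) * x ^ (a-1)) 0 hr).mpr
    (by simpa using h0)
  have h2 := h1.const_mul (r ^ (1-a))
  refine IntegrableOn.congr_fun h2 (fun t ht => ?_) measurableSet_Ioi
  rw [Real.mul_rpow hr.le (le_of_lt ht)]
  have hrr : r ^ (1-a) * r ^ (a-1) = 1 := by
    rw [← Real.rpow_add hr]; norm_num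
  linear_combination (Real.exp (-(r*t)) * t^(a-1)) * hrr

private lemma lemB {a r : ℝ} (ha : 0 < a) (hr : 0 < r) :
    ∫ t : ℝ in Ioi 0, Real.exp (-(r*t)) * t ^ (a-1) = (1/r) ^ a * Real.Gamma a := by
  rw [← Real.integral_rpow_mul_exp_neg_mul_Ioi ha hr]
  exact setIntegral_congr_fun measurableSet_Ioi fun t ht => by ring

private lemma lemC (s : ℝ) (hs : 0 < s) (hs1 : s ≠ 1) :
    ∫ μ in Ioo (0:ℝ) 1, s ^ (μ-1) = (s-1)/(s*Real.log s) := by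
  have hL : Real.log s ≠ 0 := Real.log_ne_zero_of_pos_of_ne_one hs hs1
  rw [← integral_Ioc_eq_integral_Ioo,
    ← intervalIntegral.integral_of_le (by norm_num : (0:ℝ) ≤ 1)]
  have h1 : ∀ μ : ℝ, s ^ (μ-1) = s⁻¹ * Real.exp (Real.log s * μ) := by
    intro μ
    rw [Real.rpow_def_of_pos hs, mul_comm, sub_mul, Real.exp_sub, one_mul, Real.exp_log hs]
    ring
  simp_rw [h1]
  rw [intervalIntegral.integral_const_mul,
    intervalIntegral.integral_comp_mul_left (fun x => Real.exp x) hL,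
    mul_one, mul_zero, integral_exp]
  rw [Real.exp_log hs, Real.exp_zero, smul_eq_mul]
  field_simp

/-- Laplace transform of the uniformly distributed order memory kernel
`γ(t) = ∫₀¹ t^{-μ}/Γ(1-μ) dμ`:  `γ̂(s) = (s-1)/(s log s)` for `s > 0`, `s ≠ 1`. -/
theorem laplace_distributed_order_kernel (s : ℝ) (hs : 0 < s) (hs1 : s ≠ 1) :
    IntegrableOn
        (fun t : ℝ =>
          Real.exp (-s * t) * ∫ μ in (0:ℝ)..1, t ^ (-μ) / Real.Gamma (1 - μ))
        (Ioi (0 : ℝ)) ∧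
      ∫ t in Ioi (0 : ℝ),
          Real.exp (-s * t) * ∫ μ in (0:ℝ)..1, t ^ (-μ) / Real.Gamma (1 - μ)
        = (s - 1) / (s * Real.log s) := by
  set ν := volume.restrict (Ioo (0:ℝ) 1) with hν
  set μm := volume.restrict (Ioi (0:ℝ)) with hμm
  set g : ℝ → ℝ → ℝ := fun t y => Real.exp (-(s*t)) * (t ^ (-y) / Real.Gamma (1-y)) with hg
  -- a.e. measurability on the product
  have hmeas : AEStronglyMeasurable (Function.uncurry g) (μm.prod ν) := by
    rw [hμm, hν, Measure.prod_restrict]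
    apply ContinuousOn.aestronglyMeasurable
    · intro p hp
      obtain ⟨hp1, hp2⟩ := hp
      apply ContinuousAt.continuousWithinAt
      apply ContinuousAt.mul
      · exact (Real.continuous_exp.comp ((continuous_const.mul continuous_fst).neg)).continuousAt
      · apply ContinuousAt.div
        · exact ContinuousAt.rpow continuous_fst.continuousAt
            continuous_snd.continuousAt.neg (Or.inl (ne_of_gt hp1))
        · have : ContinuousAt Real.Gamma (1 - p.2) := by
            apply (Real.differentiableAt_Gamma ?_).continuousAt
            intro m
            have : (0:ℝ) < 1 - p.2 := by simp at hp2; linarith [hp2.2]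
            intro h
            rw [h] at this
            have : (0:ℝ) ≤ (m:ℝ) := Nat.cast_nonneg m
            linarith
          exact ContinuousAt.comp (g := Real.Gamma) (f := fun q : ℝ × ℝ => 1 - q.2) this (by fun_prop)
        · apply ne_of_gt
          apply Real.Gamma_pos_of_pos
          simp at hp2; linarith [hp2.2]
    · exact (measurableSet_Ioi.prod measurableSet_Ioo)
  -- sections are integrable
  have hsect : ∀ y ∈ Ioo (0:ℝ) 1, Integrable (fun t => g t y) μm := by
    intro y hy
    have h1y : 0 < 1 - y := by linarith [hy.2]
    have := (lemA h1y hs).div_const (Real.Gamma (1-y))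
    refine this.congr (Filter.Eventually.of_forall fun t => ?_)
    show Real.exp (-(s*t)) * t ^ (1-y-1) / Real.Gamma (1-y) = g t y
    rw [hg]
    have : (1:ℝ)-y-1 = -y := by ring
    rw [this, mul_div_assoc]
  -- value of the t-integral
  have hval : ∀ y ∈ Ioo (0:ℝ) 1, (∫ t, g t y ∂μm) = s ^ (y-1) := by
    intro y hy
    have h1y : 0 < 1 - y := by linarith [hy.2]
    have hG : Real.Gamma (1-y) ≠ 0 := ne_of_gt (Real.Gamma_pos_of_pos h1y)
    have : (∫ t, g t y ∂μm) = (∫ t in Ioi (0:ℝ), Real.exp (-(s*t)) * t ^ (1-y-1)) / Real.Gamma (1-y) := by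
      rw [hμm, ← integral_div]
      refine setIntegral_congr_fun measurableSet_Ioi fun t ht => ?_
      rw [hg]
      have h2 : (1:ℝ)-y-1 = -y := by ring
      rw [h2, mul_div_assoc]
    rw [this, lemB h1y hs, mul_div_assoc, div_self hG, mul_one]
    rw [one_div, Real.inv_rpow hs.le, show (y-1) = -(1-y) by ring, Real.rpow_neg hs.le]
  -- integrability of the norm integral
  have hnorm : Integrable (fun y => ∫ t, ‖g t y‖ ∂μm) ν := by
    have hcont : Continuous (fun y : ℝ => s ^ (y-1)) := by
      apply Continuous.rpow continuous_const (continuous_id.sub continuous_const)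
      exact fun x => Or.inl hs.ne'
    have hint : IntegrableOn (fun y : ℝ => s ^ (y-1)) (Ioo 0 1) :=
      (hcont.integrableOn_Ioc (a := 0) (b := 1)).mono_set Ioo_subset_Ioc_self
    refine hint.congr ?_
    filter_upwards [ae_restrict_mem measurableSet_Ioo] with y hy
    have h1y : 0 < 1 - y := by linarith [hy.2]
    have hGpos : 0 < Real.Gamma (1-y) := Real.Gamma_pos_of_pos h1y
    have : (∫ t, ‖g t y‖ ∂μm) = ∫ t, g t y ∂μm := by
      rw [hμm]
      refine setIntegral_congr_fun measurableSet_Ioi fun t ht => ?_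
      have ht0 : 0 < t := ht
      rw [hg]
      apply Real.norm_of_nonneg
      positivity
    exact ((this.trans (hval y hy))).symm
  have hprod : Integrable (Function.uncurry g) (μm.prod ν) := by
    refine (integrable_prod_iff' hmeas).mpr ⟨?_, ?_⟩
    · filter_upwards [ae_restrict_mem measurableSet_Ioo] with y hy
      exact hsect y hy
    · exact hnorm
  -- relation between the statement's integrand and ∫ y, g t y ∂ν
  have hrel : ∀ t : ℝ, (Real.exp (-s * t) * ∫ μ' in (0:ℝ)..1, t ^ (-μ') / Real.Gamma (1 - μ'))
      = ∫ y, g t y ∂ν := by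
    intro t
    rw [hν, hg]
    rw [integral_const_mul]
    congr 1
    · rw [neg_mul]
    · rw [intervalIntegral.integral_of_le (by norm_num : (0:ℝ) ≤ 1),
        integral_Ioc_eq_integral_Ioo]
  constructor
  · have h1 : Integrable (fun t => ∫ y, g t y ∂ν) μm := hprod.integral_prod_left
    refine Integrable.congr h1 (Filter.Eventually.of_forall fun t => ?_)
    exact (hrel t).symm
  · calc ∫ t in Ioi (0:ℝ),
          Real.exp (-s * t) * ∫ μ' in (0:ℝ)..1, t ^ (-μ') / Real.Gamma (1 - μ')
        = ∫ t, ∫ y, g t y ∂ν ∂μm := by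
          rw [hμm]; exact setIntegral_congr_fun measurableSet_Ioi fun t _ => hrel t
      _ = ∫ y, ∫ t, g t y ∂μm ∂ν := integral_integral_swap hprod
      _ = ∫ y in Ioo (0:ℝ) 1, s ^ (y-1) := by
          rw [hν]
          exact setIntegral_congr_fun measurableSet_Ioo fun y hy => hval y hy
      _ = (s - 1) / (s * Real.log s) := lemC s hs hs1
end

section
/- Laplace transform of the renewal equation for Poissonian (exponential) resetting: let u : [0,∞) → ℝ be measurable, let r > 0 and s > 0 be reals, and assume t ↦ exp(−(s+r)·t) · |u(t)| is integrable on [0,∞). Define the resetting solution u_r(t) = exp(−r·t) · u(t) + ∫₀^t r · exp(−r·t') · u(t') dt'. Then t ↦ exp(−s·t) · u_r(t) is integrable on [0,∞) and ∫₀^∞ exp(−s·t) · u_r(t) dt = ((s + r)/s) · ∫₀^∞ exp(−(s+r)·t) · u(t) dt. -/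
/-!
Split `e^{-st} u_r(t)` as `e^{-(s+r)t} u(t) + e^{-st} ∫₀ᵗ w` with `w(t') = r e^{-rt'} u(t')`.
The first term contributes `û(s+r)`. For the second, Fubini over the triangle `0 < t' ≤ t`
shows that the Laplace transform of a primitive is `ŵ(s)/s`, and `ŵ(s) = r û(s+r)`.
-/

open MeasureTheory Set Real

section LaplacePrimitive

variable {s : ℝ} {w : ℝ → ℝ}

theorem integral_Ioi_exp_neg_mul_indicator_Ici (hs : 0 < s) {t' : ℝ} (ht' : 0 < t') (c : ℝ) :
    ∫ t in Ioi 0, (Ici t').indicator (fun t => exp (-s * t) * c) t = exp (-s * t') / s * c := by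
  rw [integral_indicator measurableSet_Ici, Measure.restrict_restrict measurableSet_Ici,
    inter_eq_left.2 (Ici_subset_Ioi.2 ht'), integral_mul_const, integral_Ici_eq_integral_Ioi,
    integral_exp_mul_Ioi (neg_neg_of_pos hs), neg_div_neg_eq]

theorem aestronglyMeasurable_of_integrableOn_exp_mul
    (hw : IntegrableOn (fun t => exp (-s * t) * w t) (Ioi 0)) :
    AEStronglyMeasurable w (volume.restrict (Ioi 0)) := by
  refine ((continuous_exp.comp (continuous_const_mul s)).aestronglyMeasurable.mul
    hw.aestronglyMeasurable).congr (ae_of_all _ fun t => ?_)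
  simp [← mul_assoc, ← exp_add]

theorem integrable_indicator_le_exp_neg_mul_mul (hs : 0 < s)
    (hw : IntegrableOn (fun t => exp (-s * t) * w t) (Ioi 0)) :
    Integrable ({p : ℝ × ℝ | p.2 ≤ p.1}.indicator fun p => exp (-s * p.1) * w p.2)
      ((volume.restrict (Ioi 0)).prod (volume.restrict (Ioi 0))) := by
  have hmeas : AEStronglyMeasurable ({p : ℝ × ℝ | p.2 ≤ p.1}.indicator
      fun p => exp (-s * p.1) * w p.2) ((volume.restrict (Ioi 0)).prod (volume.restrict (Ioi 0))) :=
    (((continuous_exp.comp (continuous_const_mul (-s))).comp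
      continuous_fst).aestronglyMeasurable.mul
        (aestronglyMeasurable_of_integrableOn_exp_mul hw).comp_snd).indicator
      (measurableSet_le measurable_snd measurable_fst)
  refine (integrable_prod_iff' hmeas).2 ⟨ae_of_all _ fun t' => ?_, ?_⟩
  · exact ((integrableOn_exp_mul_Ioi (neg_neg_of_pos hs) 0).mul_const (w t')).indicator
      measurableSet_Ici
  · refine (hw.norm.div_const s).congr ?_
    filter_upwards [ae_restrict_mem measurableSet_Ioi] with t' ht'
    simp only [norm_indicator_eq_indicator_norm, norm_mul, norm_of_nonneg (exp_pos _).le]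
    rw [mul_div_right_comm]
    exact (integral_Ioi_exp_neg_mul_indicator_Ici hs ht' _).symm

theorem integral_Ioi_indicator_Iic_exp_neg_mul {t : ℝ} (ht : 0 < t) :
    ∫ t' in Ioi 0, (Iic t).indicator (fun t' => exp (-s * t) * w t') t' =
      exp (-s * t) * ∫ t' in (0 : ℝ)..t, w t' := by
  rw [integral_indicator measurableSet_Iic, Measure.restrict_restrict measurableSet_Iic,
    Iic_inter_Ioi, integral_const_mul, intervalIntegral.integral_of_le ht.le]

theorem integrableOn_exp_neg_mul_mul_intervalIntegral (hs : 0 < s)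
    (hw : IntegrableOn (fun t => exp (-s * t) * w t) (Ioi 0)) :
    IntegrableOn (fun t => exp (-s * t) * ∫ t' in (0 : ℝ)..t, w t') (Ioi 0) :=
  (integrable_indicator_le_exp_neg_mul_mul hs hw).integral_prod_left.congr <|
    (ae_restrict_iff' measurableSet_Ioi).2 <| ae_of_all _ fun _ ht =>
      integral_Ioi_indicator_Iic_exp_neg_mul ht

theorem integral_exp_neg_mul_mul_intervalIntegral (hs : 0 < s)
    (hw : IntegrableOn (fun t => exp (-s * t) * w t) (Ioi 0)) :
    ∫ t in Ioi 0, exp (-s * t) * ∫ t' in (0 : ℝ)..t, w t' =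
      (∫ t in Ioi 0, exp (-s * t) * w t) / s := by
  calc ∫ t in Ioi 0, exp (-s * t) * ∫ t' in (0 : ℝ)..t, w t'
      = ∫ t in Ioi 0, ∫ t' in Ioi 0, {p : ℝ × ℝ | p.2 ≤ p.1}.indicator
          (fun p => exp (-s * p.1) * w p.2) (t, t') :=
        setIntegral_congr_fun measurableSet_Ioi fun _ ht =>
          (integral_Ioi_indicator_Iic_exp_neg_mul ht).symm
    _ = ∫ t' in Ioi 0, ∫ t in Ioi 0, {p : ℝ × ℝ | p.2 ≤ p.1}.indicator
          (fun p => exp (-s * p.1) * w p.2) (t, t') :=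
        integral_integral_swap (integrable_indicator_le_exp_neg_mul_mul hs hw)
    _ = ∫ t' in Ioi 0, exp (-s * t') * w t' / s :=
        setIntegral_congr_fun measurableSet_Ioi fun t' ht' => by
          rw [mul_div_right_comm]
          exact integral_Ioi_exp_neg_mul_indicator_Ici hs ht' (w t')
    _ = (∫ t in Ioi 0, exp (-s * t) * w t) / s := integral_div _ _

end LaplacePrimitive

theorem laplace_renewal_poissonian_general
    (u : ℝ → ℝ) (r s : ℝ) (hs : 0 < s)
    (hu_meas : Measurable u)
    (hu_int : IntegrableOn (fun t : ℝ => Real.exp (-(s + r) * t) * |u t|) (Ici (0 : ℝ)))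
    (ur : ℝ → ℝ)
    (hur : ∀ t : ℝ, ur t
      = Real.exp (-r * t) * u t + ∫ t' in (0:ℝ)..t, r * Real.exp (-r * t') * u t') :
    IntegrableOn (fun t : ℝ => Real.exp (-s * t) * ur t) (Ici (0 : ℝ)) ∧
      ∫ t in Ici (0 : ℝ), Real.exp (-s * t) * ur t
        = ((s + r) / s) * ∫ t in Ici (0 : ℝ), Real.exp (-(s + r) * t) * u t := by
  have hexp : ∀ t, exp (-(s + r) * t) = exp (-s * t) * exp (-r * t) := fun t => by
    rw [← exp_add]; ring_nf
  have hdamped : IntegrableOn (fun t => exp (-(s + r) * t) * u t) (Ioi 0) :=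
    (hu_int.mono_set Ioi_subset_Ici_self).mono' (by fun_prop : Measurable _).aestronglyMeasurable
      (ae_of_all _ fun t => by simp)
  have hexp_mul : ∀ t, r * (exp (-(s + r) * t) * u t) = exp (-s * t) * (r * exp (-r * t) * u t) :=
    fun t => by rw [hexp]; ring
  have hreset : IntegrableOn (fun t => exp (-s * t) * (r * exp (-r * t) * u t)) (Ioi 0) :=
    IntegrableOn.congr_fun (hdamped.const_mul r) (fun t _ => hexp_mul t) measurableSet_Ioi
  have hsplit : ∀ t, exp (-s * t) * ur t = exp (-(s + r) * t) * u t +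
      exp (-s * t) * ∫ t' in (0 : ℝ)..t, r * exp (-r * t') * u t' := fun t => by
    rw [hur, hexp]; ring
  rw [integrableOn_Ici_iff_integrableOn_Ioi, integral_Ici_eq_integral_Ioi,
    integral_Ici_eq_integral_Ioi]
  simp_rw [hsplit]
  have hprimitive := integrableOn_exp_neg_mul_mul_intervalIntegral hs hreset
  refine ⟨hdamped.add hprimitive, ?_⟩
  rw [integral_add hdamped hprimitive, integral_exp_neg_mul_mul_intervalIntegral hs hreset]
  simp_rw [← hexp_mul]
  rw [integral_const_mul]
  field_simp

/-- Laplace transform of the renewal equation for Poissonian resetting: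
if `u_r(t) = e^{-r t} u(t) + ∫₀^t r e^{-r t'} u(t') dt'`, then
`û_r(s) = ((s+r)/s) û(s+r)`. -/
theorem laplace_renewal_poissonian
    (u : ℝ → ℝ) (r s : ℝ) (hr : 0 < r) (hs : 0 < s)
    (hu_meas : Measurable u)
    (hu_int : IntegrableOn (fun t : ℝ => Real.exp (-(s + r) * t) * |u t|) (Ici (0 : ℝ)))
    (ur : ℝ → ℝ)
    (hur : ∀ t : ℝ, ur t
      = Real.exp (-r * t) * u t + ∫ t' in (0:ℝ)..t, r * Real.exp (-r * t') * u t') :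
    IntegrableOn (fun t : ℝ => Real.exp (-s * t) * ur t) (Ici (0 : ℝ)) ∧
      ∫ t in Ici (0 : ℝ), Real.exp (-s * t) * ur t
        = ((s + r) / s) * ∫ t in Ici (0 : ℝ), Real.exp (-(s + r) * t) * u t :=
  laplace_renewal_poissonian_general u r s hs hu_meas hu_int ur hur
end

section
/- Abelian final value theorem for the Laplace transform: let f : [0,∞) → ℝ be measurable and bounded, and suppose f(t) → L as t → ∞ for some real L. Then s · ∫₀^∞ exp(−s·t) · f(t) dt → L as s → 0 from the right. -/
open MeasureTheory Set Filter

/-- Abelian final value theorem for the Laplace transform: if `f` is measurable,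
bounded, and `f(t) → L` as `t → ∞`, then `s F̂(s) → L` as `s → 0⁺`. -/
theorem laplace_final_value_theorem
    (f : ℝ → ℝ) (L : ℝ)
    (hf_meas : Measurable f)
    (hf_bdd : ∃ C : ℝ, ∀ t : ℝ, |f t| ≤ C)
    (hf_lim : Tendsto f atTop (nhds L)) :
    Tendsto (fun s : ℝ => s * ∫ t in Ici (0 : ℝ), Real.exp (-s * t) * f t)
      (nhdsWithin 0 (Ioi (0 : ℝ))) (nhds L) := by
  obtain ⟨C, hC⟩ := hf_bdd
  -- change of variables: for s > 0, s * ∫ e^{-st} f t = ∫ e^{-u} f (u/s)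
  have key : ∀ s : ℝ, 0 < s →
      s * ∫ t in Ici (0 : ℝ), Real.exp (-s * t) * f t
        = ∫ u in Ioi (0 : ℝ), Real.exp (-u) * f (u / s) := by
    intro s hs
    have h1 : (∫ t in Ici (0 : ℝ), Real.exp (-s * t) * f t)
        = ∫ t in Ioi (0 : ℝ), (fun u => Real.exp (-u) * f (u / s)) (s * t) := by
      rw [MeasureTheory.integral_Ici_eq_integral_Ioi]
      refine setIntegral_congr_fun measurableSet_Ioi (fun t _ => ?_)
      simp only [mul_div_cancel_left₀ _ hs.ne', neg_mul]
    rw [h1, integral_comp_mul_left_Ioi (fun u => Real.exp (-u) * f (u / s)) 0 hs,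
      mul_zero, smul_eq_mul, ← mul_assoc, mul_inv_cancel₀ hs.ne', one_mul]
  have heq : ∀ᶠ s in nhdsWithin (0:ℝ) (Ioi 0),
      s * ∫ t in Ici (0 : ℝ), Real.exp (-s * t) * f t
        = ∫ u in Ioi (0 : ℝ), Real.exp (-u) * f (u / s) :=
    eventually_nhdsWithin_of_forall (fun s hs => key s hs)
  rw [tendsto_congr' heq]
  have hL : L = ∫ u in Ioi (0 : ℝ), Real.exp (-u) * L := by
    rw [integral_mul_const, integral_exp_neg_Ioi_zero, one_mul]
  rw [hL]
  -- dominated convergence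
  refine tendsto_integral_filter_of_dominated_convergence
    (fun u => Real.exp (-u) * C) ?_ ?_ ?_ ?_
  · refine Eventually.of_forall (fun s => ?_)
    exact ((Real.measurable_exp.comp measurable_neg).mul
      (hf_meas.comp (measurable_id.div_const s))).aestronglyMeasurable
  · refine Eventually.of_forall (fun s => ?_)
    refine ae_of_all _ (fun u => ?_)
    rw [Real.norm_eq_abs, abs_mul, Real.abs_exp]
    exact mul_le_mul_of_nonneg_left (hC _) (Real.exp_pos _).le
  · have h1 : IntegrableOn (fun u : ℝ => Real.exp (-u)) (Ioi 0) := by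
      simpa using exp_neg_integrableOn_Ioi 0 one_pos
    exact h1.mul_const C
  · refine ae_restrict_of_forall_mem measurableSet_Ioi (fun u hu => ?_)
    have hdiv : Tendsto (fun s : ℝ => u / s) (nhdsWithin 0 (Ioi 0)) atTop := by
      simp only [div_eq_mul_inv]
      exact Tendsto.const_mul_atTop hu tendsto_inv_nhdsGT_zero
    exact Tendsto.const_mul _ (hf_lim.comp hdiv)
end

section
/- Cosine integral against a linear denominator: for all reals k > 0 and x > 0, the improper integral ∫₀^∞ cos(κ·x)/(κ + k) dκ (as the limit of ∫₀^T as T → ∞) exists and equals −ci(k·x)·cos(k·x) − si(k·x)·sin(k·x). -/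
open MeasureTheory Set Filter intervalIntegral

private lemma key_eq (k x : ℝ) (hk : 0 < k) (hx : 0 < x) (T : ℝ) (hT : 0 ≤ T) :
    (∫ κ in (0:ℝ)..T, Real.cos (κ * x) / (κ + k)) =
      Real.cos (k * x) * (∫ y in (k * x)..((T + k) * x), Real.cos y / y) +
      Real.sin (k * x) * (∫ y in (k * x)..((T + k) * x), Real.sin y / y) := by
  have hx0 : x ≠ 0 := hx.ne'
  have h1 : (∫ κ in (0:ℝ)..T, Real.cos (κ * x) / (κ + k)) =
      ∫ u in k..(T + k), Real.cos ((u - k) * x) / u := by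
    have := intervalIntegral.integral_comp_add_right (a := 0) (b := T)
      (fun u => Real.cos ((u - k) * x) / u) k
    simpa using this
  have h2 : (∫ u in k..(T + k), Real.cos ((u - k) * x) / u) =
      ∫ u in k..(T + k), x * (Real.cos (u * x - k * x) / (u * x)) := by
    apply intervalIntegral.integral_congr
    intro u _
    show Real.cos ((u - k) * x) / u = x * (Real.cos (u * x - k * x) / (u * x))
    rcases eq_or_ne u 0 with h | h
    · simp [h]
    · rw [sub_mul]
      field_simp
  have h3 : (∫ u in k..(T + k), x * (Real.cos (u * x - k * x) / (u * x))) =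
      x⁻¹ • ∫ y in (k * x)..((T + k) * x), x * (Real.cos (y - k * x) / y) := by
    exact intervalIntegral.integral_comp_mul_right
      (fun y => x * (Real.cos (y - k * x) / y)) hx0
  have h4 : x⁻¹ • (∫ y in (k * x)..((T + k) * x), x * (Real.cos (y - k * x) / y)) =
      ∫ y in (k * x)..((T + k) * x), Real.cos (y - k * x) / y := by
    rw [intervalIntegral.integral_const_mul, smul_eq_mul]
    field_simp
  rw [h1, h2, h3, h4]
  have h5 : (∫ y in (k * x)..((T + k) * x), Real.cos (y - k * x) / y) =
      ∫ y in (k * x)..((T + k) * x),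
        (Real.cos (k * x) * (Real.cos y / y) + Real.sin (k * x) * (Real.sin y / y)) := by
    apply intervalIntegral.integral_congr
    intro y _
    show Real.cos (y - k * x) / y =
      Real.cos (k * x) * (Real.cos y / y) + Real.sin (k * x) * (Real.sin y / y)
    rw [Real.cos_sub]
    ring
  rw [h5]
  have hne : ∀ y ∈ uIcc (k * x) ((T + k) * x), y ≠ 0 := by
    intro y hy
    have h1 : k * x ≤ y ∧ y ≤ (T + k) * x ∨ (T + k) * x ≤ y ∧ y ≤ k * x := by
      rcases le_total (k * x) ((T + k) * x) with h | h
      · left; exact (uIcc_of_le h ▸ hy : y ∈ Icc _ _)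
      · right; exact (uIcc_of_ge h ▸ hy : y ∈ Icc _ _)
    have hkx : 0 < k * x := mul_pos hk hx
    have hTk : 0 < (T + k) * x := mul_pos (by linarith) hx
    rcases h1 with ⟨h, _⟩ | ⟨h, _⟩ <;> exact (by linarith : (0:ℝ) < y).ne'
  have hic : IntervalIntegrable (fun y => Real.cos y / y) volume (k * x) ((T + k) * x) := by
    apply ContinuousOn.intervalIntegrable
    exact Real.continuous_cos.continuousOn.div continuousOn_id hne
  have his : IntervalIntegrable (fun y => Real.sin y / y) volume (k * x) ((T + k) * x) := by
    apply ContinuousOn.intervalIntegrable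
    exact Real.continuous_sin.continuousOn.div continuousOn_id hne
  rw [intervalIntegral.integral_add (hic.const_mul _) (his.const_mul _),
    intervalIntegral.integral_const_mul, intervalIntegral.integral_const_mul]

/-- Cosine integral against a linear denominator: for `k > 0`, `x > 0`,
`∫₀^∞ cos(κ x)/(κ + k) dκ = -ci(k x) cos(k x) - si(k x) sin(k x)`,
where `si(z) = -∫_z^∞ sin y / y dy` and `ci(z) = -∫_z^∞ cos y / y dy`
are the integral sine and cosine (improper integrals, i.e. limits of `∫_z^T`). -/
theorem cosine_integral_linear_denominator
    (k x : ℝ) (hk : 0 < k) (hx : 0 < x) (Si Ci : ℝ)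
    (hSi : Tendsto (fun T : ℝ => ∫ y in (k * x)..T, Real.sin y / y) atTop (nhds (-Si)))
    (hCi : Tendsto (fun T : ℝ => ∫ y in (k * x)..T, Real.cos y / y) atTop (nhds (-Ci))) :
    Tendsto (fun T : ℝ => ∫ κ in (0:ℝ)..T, Real.cos (κ * x) / (κ + k)) atTop
      (nhds (-Ci * Real.cos (k * x) - Si * Real.sin (k * x))) := by
  have hT : Tendsto (fun T : ℝ => (T + k) * x) atTop atTop :=
    (tendsto_atTop_add_const_right _ k tendsto_id).atTop_mul_const hx
  have hC := (hCi.comp hT).const_mul (Real.cos (k * x))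
  have hS := (hSi.comp hT).const_mul (Real.sin (k * x))
  have h := hC.add hS
  have h2 : Real.cos (k * x) * (-Ci) + Real.sin (k * x) * (-Si) =
      -Ci * Real.cos (k * x) - Si * Real.sin (k * x) := by ring
  rw [h2] at h
  apply h.congr'
  filter_upwards [eventually_ge_atTop (0:ℝ)] with T hT0
  exact (key_eq k x hk hx T hT0).symm
end

section
/- Exact stationary state for α = 2, λ = 1 in terms of integral sine and integral cosine: let b > 0, c > 0 with b² > 4c, and set k₁ = (b − √(b² − 4c))/(2c) and k₂ = (b + √(b² − 4c))/(2c), so that 1 + b·κ + c·κ² = c·(κ + k₁)·(κ + k₂) and k₁ ≠ k₂. Then for every real x > 0, ∫₀^∞ cos(κ·x)/(1 + b·κ + c·κ²) dκ = [ ci(k₂·x)·cos(k₂·x) − ci(k₁·x)·cos(k₁·x) + si(k₂·x)·sin(k₂·x) − si(k₁·x)·sin(k₁·x) ] / ( c·(k₂ − k₁) ). -/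
open MeasureTheory Set Filter intervalIntegral

open Real Topology

/-!
The quadratic factors as `c(κ + k₁)(κ + k₂)` with `0 < k₁ < k₂`, so partial fractions reduce the
integrand to `cos(κx)/(κ + k)` for `k = k₁, k₂`. Substituting `u = x(κ + k)` and expanding
`cos(u - kx)` gives
`∫₀^T cos(κx)/(κ + k) dκ = cos(kx) ∫_{kx}^{x(T+k)} cos u/u du + sin(kx) ∫_{kx}^{x(T+k)} sin u/u du`,
which tends to `-(ci(kx) cos(kx) + si(kx) sin(kx))`. The two pieces are only conditionally
integrable, so everything is done on `[0, T]`; the truncated integrals of the original integrand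
tend to its integral over `(0, ∞)` because that one is absolutely integrable.
-/

theorem one_add_mul_add_mul_sq_eq_mul {b c k₁ k₂ : ℝ} (hc : c ≠ 0) (hdisc : 4 * c ≤ b ^ 2)
    (hk₁ : k₁ = (b - √(b ^ 2 - 4 * c)) / (2 * c)) (hk₂ : k₂ = (b + √(b ^ 2 - 4 * c)) / (2 * c))
    (κ : ℝ) : 1 + b * κ + c * κ ^ 2 = c * (κ + k₁) * (κ + k₂) := by
  have hs := sq_sqrt (sub_nonneg.mpr hdisc)
  subst hk₁ hk₂
  generalize √(b ^ 2 - 4 * c) = s at hs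
  field_simp
  linear_combination hs

theorem sub_sqrt_discrim_div_pos {b c : ℝ} (hb : 0 < b) (hc : 0 < c) :
    0 < (b - √(b ^ 2 - 4 * c)) / (2 * c) := by
  have : √(b ^ 2 - 4 * c) < b := (sqrt_lt' hb).mpr (by linarith)
  exact div_pos (by linarith) (by positivity)

theorem sub_sqrt_discrim_div_lt_add {b c : ℝ} (hc : 0 < c) (hdisc : 4 * c < b ^ 2) :
    (b - √(b ^ 2 - 4 * c)) / (2 * c) < (b + √(b ^ 2 - 4 * c)) / (2 * c) := by
  have : 0 < √(b ^ 2 - 4 * c) := sqrt_pos.mpr (by linarith)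
  gcongr
  linarith

theorem integrableOn_Ioi_inv_one_add_mul_add_mul_sq {b c : ℝ} (hb : 0 ≤ b) (hc : 0 < c) :
    IntegrableOn (fun κ : ℝ => (1 + b * κ + c * κ ^ 2)⁻¹) (Ioi 0) := by
  have hdom : Integrable (fun κ : ℝ => (1 + (√c * κ) ^ 2)⁻¹) :=
    (integrable_comp_mul_left_iff (fun y : ℝ => (1 + y ^ 2)⁻¹) (sqrt_pos.mpr hc).ne').mpr
      integrable_inv_one_add_sq
  refine hdom.integrableOn.mono' (by fun_prop) ?_
  filter_upwards [ae_restrict_mem measurableSet_Ioi] with κ (hκ : 0 < κ)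
  rw [mul_pow, sq_sqrt hc.le, norm_inv, Real.norm_of_nonneg (by positivity)]
  gcongr
  nlinarith

theorem integrableOn_Ioi_cos_mul_div_one_add_mul_add_mul_sq {b c : ℝ} (hb : 0 ≤ b) (hc : 0 < c)
    (x : ℝ) :
    IntegrableOn (fun κ : ℝ => cos (κ * x) / (1 + b * κ + c * κ ^ 2)) (Ioi 0) := by
  simp_rw [div_eq_mul_inv]
  exact (integrableOn_Ioi_inv_one_add_mul_add_mul_sq hb hc).bdd_mul (c := 1)
    (continuous_cos.comp (continuous_mul_const x)).aestronglyMeasurable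
    (ae_of_all _ fun κ => by simpa using abs_cos_le_one (κ * x))

theorem intervalIntegrable_cos_mul_div_add {k T : ℝ} (hk : 0 < k) (hT : 0 ≤ T) (x : ℝ) :
    IntervalIntegrable (fun κ => cos (κ * x) / (κ + k)) volume 0 T := by
  apply ContinuousOn.intervalIntegrable
  rw [uIcc_of_le hT]
  exact (continuous_cos.comp (continuous_mul_const x)).continuousOn.div (by fun_prop)
    fun κ hκ => (add_pos_of_nonneg_of_pos hκ.1 hk).ne'

theorem integral_cos_mul_div_add_eq {k x T : ℝ} (hk : 0 < k) (hx : 0 < x) (hT : 0 ≤ T) :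
    ∫ κ in (0 : ℝ)..T, cos (κ * x) / (κ + k) =
      cos (k * x) * (∫ u in (k * x)..(x * T + k * x), cos u / u)
        + sin (k * x) * ∫ u in (k * x)..(x * T + k * x), sin u / u := by
  have hu_ne : ∀ u ∈ uIcc (k * x) (x * T + k * x), u ≠ 0 := by
    rw [uIcc_of_le (by nlinarith)]
    exact fun u hu => ((mul_pos hk hx).trans_le hu.1).ne'
  set f : ℝ → ℝ := fun u => cos (u - k * x) / u
  have hsubst : (fun κ => cos (κ * x) / (κ + k)) = fun κ => x * f (x * κ + k * x) := by
    ext κ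
    rw [show x * κ + k * x = x * (κ + k) by ring]
    rcases eq_or_ne (κ + k) 0 with h | h
    · simp [f, h]
    · simp only [f, show x * (κ + k) - k * x = κ * x by ring]
      field_simp
  have hf : f = fun u => cos (k * x) * (cos u / u) + sin (k * x) * (sin u / u) := by
    ext u
    simp only [f, cos_sub]
    ring
  rw [hsubst, intervalIntegral.integral_const_mul, intervalIntegral.integral_comp_mul_add _ hx.ne',
    mul_zero, zero_add, smul_eq_mul, ← mul_assoc, mul_inv_cancel₀ hx.ne', one_mul, hf,
    intervalIntegral.integral_add, intervalIntegral.integral_const_mul,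
    intervalIntegral.integral_const_mul]
  · exact ((continuous_cos.continuousOn.div continuousOn_id hu_ne).intervalIntegrable).const_mul _
  · exact ((continuous_sin.continuousOn.div continuousOn_id hu_ne).intervalIntegrable).const_mul _

theorem tendsto_integral_cos_mul_div_add {k x Si Ci : ℝ} (hk : 0 < k) (hx : 0 < x)
    (hSi : Tendsto (fun T : ℝ => ∫ y in (k * x)..T, sin y / y) atTop (𝓝 (-Si)))
    (hCi : Tendsto (fun T : ℝ => ∫ y in (k * x)..T, cos y / y) atTop (𝓝 (-Ci))) :
    Tendsto (fun T : ℝ => ∫ κ in (0 : ℝ)..T, cos (κ * x) / (κ + k)) atTop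
      (𝓝 (-(Ci * cos (k * x) + Si * sin (k * x)))) := by
  have hend : Tendsto (fun T : ℝ => x * T + k * x) atTop atTop :=
    tendsto_atTop_add_const_right _ _ (tendsto_id.const_mul_atTop hx)
  have hlim := ((hCi.comp hend).const_mul (cos (k * x))).add ((hSi.comp hend).const_mul (sin (k * x)))
  rw [show cos (k * x) * -Ci + sin (k * x) * -Si = -(Ci * cos (k * x) + Si * sin (k * x)) by ring]
    at hlim
  refine hlim.congr' ?_
  filter_upwards [eventually_ge_atTop 0] with T hT
  exact (integral_cos_mul_div_add_eq hk hx hT).symm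

/-- Exact stationary state for `α = 2`, `λ = 1`: with `k₁ = (b - √(b²-4c))/(2c)`,
`k₂ = (b + √(b²-4c))/(2c)`,
`∫₀^∞ cos(κ x)/(1 + b κ + c κ²) dκ
  = [ci(k₂ x) cos(k₂ x) - ci(k₁ x) cos(k₁ x) + si(k₂ x) sin(k₂ x) - si(k₁ x) sin(k₁ x)]
      / (c (k₂ - k₁))`,
where `si(z) = -∫_z^∞ sin y / y dy` and `ci(z) = -∫_z^∞ cos y / y dy` are the
integral sine and cosine, understood as limits of `∫_z^T` as `T → ∞`. -/
theorem stationary_state_alpha2_lambda1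
    (b c : ℝ) (hb : 0 < b) (hc : 0 < c) (hdisc : 4 * c < b ^ 2)
    (k₁ k₂ : ℝ)
    (hk₁ : k₁ = (b - Real.sqrt (b ^ 2 - 4 * c)) / (2 * c))
    (hk₂ : k₂ = (b + Real.sqrt (b ^ 2 - 4 * c)) / (2 * c))
    (x : ℝ) (hx : 0 < x)
    (Si₁ Ci₁ Si₂ Ci₂ : ℝ)
    (hSi₁ : Tendsto (fun T : ℝ => ∫ y in (k₁ * x)..T, Real.sin y / y) atTop (nhds (-Si₁)))
    (hCi₁ : Tendsto (fun T : ℝ => ∫ y in (k₁ * x)..T, Real.cos y / y) atTop (nhds (-Ci₁)))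
    (hSi₂ : Tendsto (fun T : ℝ => ∫ y in (k₂ * x)..T, Real.sin y / y) atTop (nhds (-Si₂)))
    (hCi₂ : Tendsto (fun T : ℝ => ∫ y in (k₂ * x)..T, Real.cos y / y) atTop (nhds (-Ci₂))) :
    ∫ κ in Ioi (0 : ℝ), Real.cos (κ * x) / (1 + b * κ + c * κ ^ 2)
      = (Ci₂ * Real.cos (k₂ * x) - Ci₁ * Real.cos (k₁ * x)
          + Si₂ * Real.sin (k₂ * x) - Si₁ * Real.sin (k₁ * x)) / (c * (k₂ - k₁)) := by
  have hk₁_pos : 0 < k₁ := hk₁ ▸ sub_sqrt_discrim_div_pos hb hc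
  have hk₁₂ : k₁ < k₂ := hk₁ ▸ hk₂ ▸ sub_sqrt_discrim_div_lt_add hc hdisc
  have hk₂_pos : 0 < k₂ := hk₁_pos.trans hk₁₂
  have hpartial : ∀ κ, 0 ≤ κ → cos (κ * x) / (1 + b * κ + c * κ ^ 2) =
      (c * (k₂ - k₁))⁻¹ * (cos (κ * x) / (κ + k₁) - cos (κ * x) / (κ + k₂)) := by
    intro κ hκ
    have : κ + k₁ ≠ 0 := by positivity
    have : κ + k₂ ≠ 0 := by positivity
    have : k₂ - k₁ ≠ 0 := sub_ne_zero.mpr hk₁₂.ne'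
    rw [one_add_mul_add_mul_sq_eq_mul hc.ne' hdisc.le hk₁ hk₂]
    field_simp
    ring
  have htrunc : Tendsto (fun T => ∫ κ in (0 : ℝ)..T, cos (κ * x) / (1 + b * κ + c * κ ^ 2)) atTop
      (𝓝 ((Ci₂ * cos (k₂ * x) - Ci₁ * cos (k₁ * x) + Si₂ * sin (k₂ * x) - Si₁ * sin (k₁ * x))
        / (c * (k₂ - k₁)))) := by
    have hlim := ((tendsto_integral_cos_mul_div_add hk₁_pos hx hSi₁ hCi₁).sub
      (tendsto_integral_cos_mul_div_add hk₂_pos hx hSi₂ hCi₂)).const_mul (c * (k₂ - k₁))⁻¹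
    convert hlim.congr' ?_ using 2
    · ring
    filter_upwards [eventually_ge_atTop 0] with T hT
    rw [← intervalIntegral.integral_sub (intervalIntegrable_cos_mul_div_add hk₁_pos hT x)
      (intervalIntegrable_cos_mul_div_add hk₂_pos hT x), ← intervalIntegral.integral_const_mul]
    refine intervalIntegral.integral_congr fun κ hκ => (hpartial κ ?_).symm
    exact (uIcc_of_le hT ▸ hκ).1
  exact tendsto_nhds_unique (intervalIntegral_tendsto_integral_Ioi 0
    (integrableOn_Ioi_cos_mul_div_one_add_mul_add_mul_sq hb.le hc x) tendsto_id) htrunc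
end
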